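/- Let ν be a Lévy measure on ℝ^d and let z ∈ ℝ^d with z ≠ 0. Then the measure ν_z := ν ∧ (δ_z ∗ ν) is a finite measure, i.e. ν_z(ℝ^d) < ∞. -/
import Mathlib


open MeasureTheory Set
open scoped ENNReal RealInnerProductSpace

noncomputable section

/-- `ℝ^d` as a Euclidean space. -/
abbrev Ed (d : ℕ) := EuclideanSpace ℝ (Fin d)

/-- A Lévy measure on `ℝ^d`: it puts no mass at the origin and integrates `min(1, |z|²)`. -/
def IsLevyMeasure {d : ℕ} (ν : Measure (Ed d)) : Prop :=
  ν {0} = 0 ∧ ∫⁻ z, ENNReal.ofReal (min 1 (‖z‖ ^ 2)) ∂ν < ⊤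

/-- `ν_u := ν ∧ (δ_u ∗ ν)`, the infimum of `ν` and the pushforward of `ν`
under the translation `w ↦ w + u`. -/
def nuShift {d : ℕ} (ν : Measure (Ed d)) (u : Ed d) : Measure (Ed d) :=
  ν ⊓ ν.map (fun w => w + u)

/-- for a Lévy measure `ν` and `z ≠ 0`, the measure `ν_z = ν ∧ (δ_z ∗ ν)`
is a finite measure. -/
theorem statement0 {d : ℕ} (ν : Measure (Ed d)) (hν : IsLevyMeasure ν)
    (z : Ed d) (hz : z ≠ 0) :
    nuShift ν z Set.univ < ⊤ := by
  obtain ⟨-, hint⟩ := hν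
  set r : ℝ := ‖z‖ / 2 with hr
  have hz0 : 0 < ‖z‖ := norm_pos_iff.mpr hz
  have hr0 : 0 < r := by positivity
  set c : ℝ≥0∞ := ENNReal.ofReal (min 1 (r ^ 2)) with hc
  have hc0 : 0 < c := ENNReal.ofReal_pos.mpr (lt_min one_pos (by positivity))
  have hmeas : Measurable fun w : Ed d => ENNReal.ofReal (min 1 (‖w‖ ^ 2)) := by
    apply Measurable.ennreal_ofReal
    exact (measurable_const.min ((measurable_norm).pow_const 2))
  have key : ∀ S : Set (Ed d), (∀ w ∈ S, r ≤ ‖w‖) → ν S < ⊤ := by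
    intro S hS
    have hsub : S ⊆ {w | c ≤ ENNReal.ofReal (min 1 (‖w‖ ^ 2))} := by
      intro w hw
      have : r ^ 2 ≤ ‖w‖ ^ 2 := by
        have := hS w hw
        nlinarith
      exact ENNReal.ofReal_le_ofReal (min_le_min le_rfl this)
    have hmul := mul_meas_ge_le_lintegral₀
      (μ := ν) (f := fun w => ENNReal.ofReal (min 1 (‖w‖ ^ 2))) hmeas.aemeasurable c
    have hfin : ν {w | c ≤ ENNReal.ofReal (min 1 (‖w‖ ^ 2))} < ⊤ := by
      by_contra h
      push_neg at h
      have htop : ν {w | c ≤ ENNReal.ofReal (min 1 (‖w‖ ^ 2))} = ⊤ := top_le_iff.mp h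
      rw [htop, ENNReal.mul_top hc0.ne'] at hmul
      exact (lt_irrefl ⊤) (lt_of_le_of_lt hmul hint)
    exact lt_of_le_of_lt (measure_mono hsub) hfin
  have h1 : ν {w | r ≤ ‖w‖} < ⊤ := key _ (fun w hw => hw)
  have hmapmeas : Measurable fun w : Ed d => w + z := measurable_add_const z
  have h2 : ν.map (fun w => w + z) (Metric.ball 0 r) ≤ ν {w | r ≤ ‖w‖} := by
    rw [Measure.map_apply hmapmeas measurableSet_ball]
    apply measure_mono
    intro w hw
    simp only [Set.mem_preimage, mem_ball_zero_iff] at hw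
    have h3 : ‖z‖ ≤ ‖w + z‖ + ‖w‖ := by
      have hzeq : z = (w + z) - w := by abel
      calc ‖z‖ = ‖(w + z) - w‖ := by rw [← hzeq]
        _ ≤ ‖w + z‖ + ‖w‖ := norm_sub_le _ _
    show r ≤ ‖w‖
    simp only [hr] at hw ⊢
    linarith
  have hcover : (Set.univ : Set (Ed d)) ⊆ {w | r ≤ ‖w‖} ∪ Metric.ball 0 r := by
    intro w _
    rcases le_or_gt r ‖w‖ with h | h
    · exact Or.inl h
    · exact Or.inr (mem_ball_zero_iff.mpr h)
  have hle1 : nuShift ν z ≤ ν := inf_le_left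
  have hle2 : nuShift ν z ≤ ν.map (fun w => w + z) := inf_le_right
  calc nuShift ν z Set.univ
      ≤ nuShift ν z ({w | r ≤ ‖w‖} ∪ Metric.ball 0 r) := measure_mono hcover
    _ ≤ nuShift ν z {w | r ≤ ‖w‖} + nuShift ν z (Metric.ball 0 r) := measure_union_le _ _
    _ ≤ ν {w | r ≤ ‖w‖} + ν.map (fun w => w + z) (Metric.ball 0 r) :=
        add_le_add (hle1 _) (hle2 _)
    _ ≤ ν {w | r ≤ ‖w‖} + ν {w | r ≤ ‖w‖} := add_le_add le_rfl h2
    _ < ⊤ := by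
        exact ENNReal.add_lt_top.mpr ⟨h1, h1⟩

end
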